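/- arXiv:2104.00895 — 3 statements merged into one kernel-verified Lean document; each statement's English description precedes it below -/
import Mathlib

section
/- Let m ≥ 2 be an integer, x_ℓ = exp(πiℓ/m), and k a nonnegative integer. Then S_k := ∑_{ℓ=1}^{m-1} (x_ℓ^{2k+1} - x_ℓ^{-2k-1})/(x_ℓ - x_ℓ^{-1}) = -2α_m(k) + m - 1, where α_m(k) is the least nonnegative residue of k modulo m. -/
/-!
With `ω = exp(2πi/m)` we have `x_ℓ² = ω^ℓ`, and the `ℓ`-th summand is the symmetric geometric
sum `∑_{|d| ≤ k} ω^{ℓd}`. Adding the `ℓ = 0` term, which is `2k + 1`, and summing over `ℓ` first,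
orthogonality of the `m`-th roots of unity turns the double sum into `m` times the number of
multiples of `m` in `[-k, k]`, namely `2⌊k/m⌋ + 1`.
-/

open Complex Finset

theorem zpow_sub_zpow_neg_div_eq_sum {K : Type*} [Field K] {x : K} (hx : x ≠ 0)
    (hx2 : x ^ 2 ≠ 1) (k : ℕ) :
    (x ^ (2 * (k : ℤ) + 1) - x ^ (-(2 * (k : ℤ) + 1))) / (x - x ^ (-1 : ℤ))
      = ∑ j ∈ range (2 * k + 1), (x ^ 2) ^ ((j : ℤ) - k) := by
  have hgeom := geom_sum_mul (x ^ 2) (2 * k + 1)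
  simp_rw [zpow_sub₀ (pow_ne_zero 2 hx), zpow_natCast, ← sum_div]
  rw [show 2 * (k : ℤ) + 1 = ((2 * k + 1 : ℕ) : ℤ) by push_cast; ring, zpow_neg, zpow_natCast,
    zpow_neg_one]
  field_simp
  linear_combination (-x ^ (2 * k + 1)) * hgeom

theorem IsPrimitiveRoot.sum_range_pow_zpow {K : Type*} [Field K] {ζ : K} {n : ℕ}
    (hζ : IsPrimitiveRoot ζ n) (d : ℤ) :
    ∑ ℓ ∈ range n, (ζ ^ ℓ) ^ d = if (n : ℤ) ∣ d then (n : K) else 0 := by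
  simp_rw [← zpow_natCast ζ, zpow_comm _ _ d, zpow_natCast]
  split_ifs with hd
  · simp [(hζ.zpow_eq_one_iff_dvd d).mpr hd]
  · have hne : ζ ^ d - 1 ≠ 0 := sub_ne_zero.mpr fun h => hd ((hζ.zpow_eq_one_iff_dvd d).mp h)
    have hpow : (ζ ^ d) ^ n = 1 := by
      rw [← zpow_natCast, zpow_comm, zpow_natCast, hζ.pow_eq_one, one_zpow]
    exact (mul_eq_zero.mp ((geom_sum_mul _ n).trans (by rw [hpow, sub_self]))).resolve_right hne

theorem Nat.count_modEq_two_mul_add_one {m : ℕ} (hm : 0 < m) (k : ℕ) :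
    (2 * k + 1).count (· ≡ k [MOD m]) = 2 * (k / m) + 1 := by
  obtain ⟨q, r, hr, rfl⟩ : ∃ q r, r < m ∧ k = r + m * q :=
    ⟨k / m, k % m, Nat.mod_lt k hm, (Nat.mod_add_div k m).symm⟩
  rw [Nat.count_modEq_card _ hm, show 2 * (r + m * q) + 1 = 2 * r + 1 + m * (2 * q) by ring]
  simp only [Nat.add_mul_div_left _ _ hm, Nat.add_mul_mod_self_left, Nat.div_eq_of_lt hr,
    Nat.mod_eq_of_lt hr]
  rcases lt_or_ge (2 * r + 1) m with h | h
  · rw [Nat.div_eq_of_lt h, Nat.mod_eq_of_lt h, if_pos (by lia)]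
    lia
  · obtain ⟨s, hs⟩ : ∃ s, 2 * r + 1 = s + m * 1 := ⟨2 * r + 1 - m, by lia⟩
    rw [hs, Nat.add_mul_div_left _ _ hm, Nat.add_mul_mod_self_left, Nat.div_eq_of_lt (by lia),
      Nat.mod_eq_of_lt (by lia), if_neg (by lia)]
    lia

theorem IsPrimitiveRoot.sum_range_sum_range_zpow {K : Type*} [Field K] {ζ : K} {n : ℕ}
    (hζ : IsPrimitiveRoot ζ n) (hn : 0 < n) (k : ℕ) :
    ∑ ℓ ∈ range n, ∑ j ∈ range (2 * k + 1), (ζ ^ ℓ) ^ ((j : ℤ) - k)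
      = n * ((2 * (k / n) + 1 : ℕ) : K) := by
  rw [sum_comm]
  simp_rw [hζ.sum_range_pow_zpow, ← Nat.modEq_iff_dvd, Nat.ModEq.comm (a := k)]
  rw [sum_ite, sum_const_zero, add_zero, sum_const, ← Nat.count_eq_card_filter_range,
    Nat.count_modEq_two_mul_add_one hn, nsmul_eq_mul, mul_comm]

/-- For `m ≥ 2`, `x_ℓ = exp(πiℓ/m)` and a nonnegative integer `k`,
`∑_{ℓ=1}^{m-1} (x_ℓ^{2k+1} - x_ℓ^{-2k-1})/(x_ℓ - x_ℓ^{-1}) = -2 α_m(k) + m - 1`,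
where `α_m(k)` is the least nonnegative residue of `k` mod `m`. -/
theorem sum_S_k (m : ℕ) (hm : 2 ≤ m) (k : ℕ) :
    ∑ ℓ ∈ Finset.Icc 1 (m - 1),
      ((Complex.exp (Real.pi * Complex.I * ℓ / m)) ^ (2 * (k : ℤ) + 1)
        - (Complex.exp (Real.pi * Complex.I * ℓ / m)) ^ (-(2 * (k : ℤ) + 1)))
      / ((Complex.exp (Real.pi * Complex.I * ℓ / m))
        - (Complex.exp (Real.pi * Complex.I * ℓ / m)) ^ (-1 : ℤ))
      = -2 * (((k : ℤ) % (m : ℤ) : ℤ) : ℂ) + (m : ℂ) - 1 := by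
  have hω := Complex.isPrimitiveRoot_exp m (by lia)
  have hsq (ℓ : ℕ) : exp (Real.pi * I * ℓ / m) ^ 2 = exp (2 * Real.pi * I / m) ^ ℓ := by
    rw [← exp_nat_mul, ← exp_nat_mul]
    ring_nf
  have hsq_ne_one : ∀ ℓ ∈ Icc 1 (m - 1), exp (Real.pi * I * ℓ / m) ^ 2 ≠ 1 := by
    intro ℓ hℓ hℓm
    rw [mem_Icc] at hℓ
    rw [hsq, hω.pow_eq_one_iff_dvd] at hℓm
    have := Nat.le_of_dvd (by lia) hℓm
    lia
  have hfull := hω.sum_range_sum_range_zpow (by lia) k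
  simp only [sum_range_eq_add_Ico _ (by lia : 0 < m), pow_zero, one_zpow, sum_const, card_range,
    nsmul_eq_mul, mul_one] at hfull
  have hk : (k : ℂ) = m * (k / m : ℕ) + (k % m : ℕ) := mod_cast (Nat.div_add_mod k m).symm
  rw [sum_congr rfl fun ℓ hℓ => zpow_sub_zpow_neg_div_eq_sum (exp_ne_zero _) (hsq_ne_one ℓ hℓ) k,
    ← Ico_add_one_right_eq_Icc, Nat.sub_add_cancel (by lia), ← Int.natCast_mod, Int.cast_natCast]
  simp_rw [hsq]
  push_cast at hfull
  linear_combination hfull - 2 * hk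
end

section
/- Let m ≥ 2 be an integer, n an integer, and set ℓ = α_m(n) (the least nonnegative residue of n mod m). Then β := (1/m) ∑_{r=0}^{m-1} r·[(2α_m(r-n) + 1 - m)/(2m) + (2α_m(r+n) + 1 - m)/(2m)] equals (m² - 1)/(6m) - ℓ(m - ℓ)/m. -/
/-!
For a shift `k`, the map `f r = (r + k) % m` permutes `{0, …, m - 1}`, and `d r = f r - r` is
congruent to `k` with `|d r| < m`, so `d r ∈ {ℓ, ℓ - m}` where `ℓ = k % m`. Hence
`d r ^ 2 = (2ℓ - m) d r + ℓ (m - ℓ)`, and since `∑ d r = 0` this sums to `∑ d r ^ 2 = m ℓ (m - ℓ)`.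
Polarisation then gives `2 ∑ r f r = ∑ r ^ 2 + ∑ f r ^ 2 - ∑ d r ^ 2 = 2 ∑ r ^ 2 - m ℓ (m - ℓ)`,
and the shifts `k = ± n` have the same `ℓ (m - ℓ)`.
-/

open Finset

theorem Int.sq_eq_of_modEq {m n d : ℤ} (hd : |d| < m) (h : d ≡ n [ZMOD m]) :
    d ^ 2 = (2 * (n % m) - m) * d + n % m * (m - n % m) := by
  obtain ⟨hd₁, hd₂⟩ := abs_lt.mp hd
  have hm : 0 < m := by linarith
  have hdiv : n % m + m * (d / m) = d := h ▸ Int.emod_add_mul_ediv d m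
  have h₀ := Int.emod_nonneg n hm.ne'
  have h₁ := Int.emod_lt_of_pos n hm
  have hq : d / m = 0 ∨ d / m = -1 := by
    have : -2 < d / m := lt_of_mul_lt_mul_left (by linarith) hm.le
    have : d / m < 1 := lt_of_mul_lt_mul_left (by linarith) hm.le
    omega
  rcases hq with hq | hq <;> rw [← hdiv, hq] <;> ring

theorem Int.neg_emod_mul_sub_neg_emod (k : ℤ) {m : ℤ} (hm : 0 ≤ m) :
    (-k) % m * (m - (-k) % m) = k % m * (m - k % m) := by
  by_cases hk : m ∣ k
  · simp [Int.emod_eq_zero_of_dvd hk, Int.emod_eq_zero_of_dvd (dvd_neg.mpr hk)]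
  · rw [Int.neg_emod, if_neg hk, Int.natCast_natAbs, abs_of_nonneg hm]
    ring

theorem Finset.sum_sq_eq_card_mul_of_modEq {ι : Type*} (s : Finset ι) {m n : ℤ} (d : ι → ℤ)
    (hsum : ∑ i ∈ s, d i = 0) (hd : ∀ i ∈ s, |d i| < m ∧ d i ≡ n [ZMOD m]) :
    ∑ i ∈ s, d i ^ 2 = #s * (n % m * (m - n % m)) := by
  rw [sum_congr rfl fun i hi ↦ Int.sq_eq_of_modEq (hd i hi).1 (hd i hi).2, sum_add_distrib,
    ← mul_sum, hsum, sum_const, nsmul_eq_mul]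
  ring

theorem Finset.sum_range_comp_emod_add {M : Type*} [AddCommMonoid M] (m : ℕ) (k : ℤ)
    (f : ℤ → M) : ∑ r ∈ range m, f (((r : ℤ) + k) % m) = ∑ r ∈ range m, f r := by
  rcases Nat.eq_zero_or_pos m with rfl | hm
  · simp
  have hm' : (0 : ℤ) < m := by exact_mod_cast hm
  have hmem (x : ℤ) : (x % m).toNat ∈ range m := by
    have := Int.emod_lt_of_pos x hm'
    rw [mem_range]; omega
  have hcast (x : ℤ) : (((x % m).toNat : ℕ) : ℤ) = x % m :=
    Int.toNat_of_nonneg (Int.emod_nonneg x hm'.ne')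
  have hinv (r : ℕ) (hr : r ∈ range m) (a b : ℤ) (hab : a + b = 0) :
      (((((r : ℤ) + a) % m).toNat + b) % m).toNat = r := by
    rw [hcast, Int.emod_add_emod, add_assoc, hab, add_zero, Int.emod_eq_of_lt (by omega)
      (by simpa using hr)]
    simp
  refine sum_nbij' (fun r ↦ (((r : ℤ) + k) % m).toNat) (fun r ↦ (((r : ℤ) + -k) % m).toNat)
    (fun r _ ↦ hmem _) (fun r _ ↦ hmem _) (fun r hr ↦ hinv r hr k (-k) (by ring))
    (fun r hr ↦ hinv r hr (-k) k (by ring)) (fun r _ ↦ by rw [hcast])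

theorem Finset.sum_range_emod_add_sub_sq (m : ℕ) (hm : 0 < m) (k : ℤ) :
    ∑ r ∈ range m, (((r : ℤ) + k) % m - r) ^ 2 = m * (k % m * (m - k % m)) := by
  have hm' : (0 : ℤ) < m := by exact_mod_cast hm
  refine (sum_sq_eq_card_mul_of_modEq (range m) (m := m) (n := k) _ ?_
    fun r hr ↦ ⟨?_, ?_⟩).trans (by rw [card_range])
  · rw [sum_sub_distrib, sub_eq_zero]
    exact sum_range_comp_emod_add m k id
  · exact abs_sub_lt_of_nonneg_of_lt (Int.emod_nonneg _ hm'.ne') (Int.emod_lt_of_pos _ hm')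
      r.cast_nonneg (by simpa using hr)
  · simpa using ((Int.mod_modEq ((r : ℤ) + k) m).sub_right (r : ℤ))

theorem Finset.two_mul_sum_range_mul_emod_add (m : ℕ) (k : ℤ) :
    2 * ∑ r ∈ range m, (r : ℤ) * (((r : ℤ) + k) % m)
      = 2 * ∑ r ∈ range m, (r : ℤ) ^ 2 - ∑ r ∈ range m, (((r : ℤ) + k) % m - r) ^ 2 := by
  have hperm := sum_range_comp_emod_add m k (· ^ 2)
  have hcross : ∑ r ∈ range m, 2 * (((r : ℤ) + k) % m) * r
      = 2 * ∑ r ∈ range m, (r : ℤ) * (((r : ℤ) + k) % m) := by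
    rw [mul_sum]
    exact sum_congr rfl fun r _ ↦ by ring
  rw [sum_congr rfl fun r _ ↦ sub_sq _ _, sum_add_distrib, sum_sub_distrib, hperm, hcross]
  ring

theorem Finset.sum_range_intCast_mul_two (m : ℕ) :
    (∑ r ∈ range m, (r : ℤ)) * 2 = m * (m - 1) := by
  induction m with
  | zero => simp
  | succ m ih => rw [sum_range_succ]; push_cast; linear_combination ih

theorem Finset.sum_range_intCast_sq_mul_six (m : ℕ) :
    (∑ r ∈ range m, (r : ℤ) ^ 2) * 6 = m * (m - 1) * (2 * m - 1) := by
  induction m with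
  | zero => simp
  | succ m ih => rw [sum_range_succ]; push_cast; linear_combination ih

theorem six_mul_sum_range_mul_emod_sub_add_emod_add (m : ℕ) (hm : 0 < m) (n : ℤ) :
    6 * ∑ r ∈ range m, (r : ℤ) * (((r : ℤ) - n) % m + ((r : ℤ) + n) % m + 1 - m)
      = (m ^ 2 - 1) * m - 6 * m * (n % m * (m - n % m)) := by
  have hplus := two_mul_sum_range_mul_emod_add m n
  have hminus := two_mul_sum_range_mul_emod_add m (-n)
  rw [sum_range_emod_add_sub_sq m hm] at hplus hminus
  rw [Int.neg_emod_mul_sub_neg_emod n m.cast_nonneg] at hminus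
  simp only [← sub_eq_add_neg] at hminus
  have hsplit : ∑ r ∈ range m, (r : ℤ) * (((r : ℤ) - n) % m + ((r : ℤ) + n) % m + 1 - m)
      = ∑ r ∈ range m, (r : ℤ) * (((r : ℤ) - n) % m) + ∑ r ∈ range m, (r : ℤ) * (((r : ℤ) + n) % m)
        + (1 - m) * ∑ r ∈ range m, (r : ℤ) := by
    rw [mul_sum, ← sum_add_distrib, ← sum_add_distrib]
    exact sum_congr rfl fun r _ ↦ by ring
  rw [hsplit]
  linear_combination 3 * hplus + 3 * hminus + 2 * sum_range_intCast_sq_mul_six m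
    + 3 * (1 - m) * sum_range_intCast_mul_two m

/-- For `m ≥ 2`, an integer `n` and `ℓ = α_m(n)`, the quantity
`β = (1/m) ∑_{r=0}^{m-1} r·[(2α_m(r-n)+1-m)/(2m) + (2α_m(r+n)+1-m)/(2m)]`
equals `(m²-1)/(6m) - ℓ(m-ℓ)/m`. -/
theorem beta_eval (m : ℤ) (hm : 2 ≤ m) (n : ℤ) :
    (1 / (m : ℚ)) * ∑ r ∈ Finset.range m.toNat,
      (r : ℚ) * (((2 * ((((r : ℤ) - n) % m : ℤ) : ℚ) + 1 - m) / (2 * m))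
        + ((2 * ((((r : ℤ) + n) % m : ℤ) : ℚ) + 1 - m) / (2 * m)))
      = ((m : ℚ) ^ 2 - 1) / (6 * m)
        - ((n % m : ℤ) : ℚ) * ((m : ℚ) - ((n % m : ℤ) : ℚ)) / m := by
  lift m to ℕ using by omega
  have hm0 : (m : ℚ) ≠ 0 := by norm_cast; omega
  have hsix := congrArg (fun z : ℤ ↦ (z : ℚ))
    (six_mul_sum_range_mul_emod_sub_add_emod_add m (by omega) n)
  push_cast at hsix
  simp only [Int.toNat_natCast, Int.cast_natCast]
  have hsum : ∑ r ∈ range m,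
      (r : ℚ) * (((2 * ((((r : ℤ) - n) % m : ℤ) : ℚ) + 1 - m) / (2 * m))
        + ((2 * ((((r : ℤ) + n) % m : ℤ) : ℚ) + 1 - m) / (2 * m)))
      = (∑ r ∈ range m, (r : ℚ) * (((((r : ℤ) - n) % m : ℤ) : ℚ) + ((((r : ℤ) + n) % m : ℤ) : ℚ)
          + 1 - m)) / m := by
    rw [sum_div]
    refine sum_congr rfl fun r _ ↦ ?_
    field_simp
    ring
  rw [hsum]
  field_simp
  linear_combination hsix
end

section
/- Let n be a nonnegative integer and α > 0 real. Then ∑_{r=0}^n binom(2n,2r)(-1)^r Γ(r+1/2)Γ(α+2n-r-1/2)/Γ(α+2n) = √π Γ(α+n)Γ(α+n-1/2)/(Γ(α)Γ(α+2n)). -/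
open Real Finset

noncomputable def myc (n r : ℕ) : ℝ :=
  (Nat.factorial (2*n) : ℝ) / ((Nat.factorial (2*n - 2*r) : ℝ) * 4^r * (Nat.factorial r : ℝ))

noncomputable def myasc (b : ℝ) (k : ℕ) : ℝ := ∏ i ∈ Finset.range k, (b + i)

lemma myc_zero (n : ℕ) : myc n 0 = 1 := by
  simp only [myc, Nat.mul_zero, Nat.sub_zero, pow_zero, Nat.factorial_zero, Nat.cast_one,
    mul_one]
  exact div_self (by exact_mod_cast (Nat.factorial_pos _).ne')

lemma myc_rec (n r : ℕ) (h : r + 1 ≤ n) :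
    myc (n+1) (r+1) = myc n (r+1) + (2*(n:ℝ) - r + 1/2) * myc n r := by
  obtain ⟨m, rfl⟩ : ∃ m, n = r + 1 + m := ⟨n - (r+1), by omega⟩
  unfold myc
  rw [show 2*(r+1+m+1) - 2*(r+1) = 2*m + 2 by omega,
      show 2*(r+1+m) - 2*(r+1) = 2*m by omega,
      show 2*(r+1+m) - 2*r = 2*m + 2 by omega,
      show 2*(r+1+m+1) = (2*(r+1+m) + 1) + 1 by ring,
      show (2*m+2) = (2*m+1)+1 by ring,
      Nat.factorial_succ, Nat.factorial_succ, Nat.factorial_succ, Nat.factorial_succ,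
      Nat.factorial_succ r]
  have h1 : ((2*m+1:ℕ).factorial : ℝ) ≠ 0 := by exact_mod_cast (Nat.factorial_pos _).ne'
  have h2 : ((2*m:ℕ).factorial : ℝ) ≠ 0 := by exact_mod_cast (Nat.factorial_pos _).ne'
  have h3 : ((r:ℕ).factorial : ℝ) ≠ 0 := by exact_mod_cast (Nat.factorial_pos _).ne'
  have h4 : ((2*(r+1+m):ℕ).factorial : ℝ) ≠ 0 := by exact_mod_cast (Nat.factorial_pos _).ne'
  push_cast
  field_simp
  ring

lemma myc_last (n : ℕ) : myc (n+1) (n+1) = ((n:ℝ) + 1/2) * myc n n := by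
  unfold myc
  rw [show 2*(n+1) - 2*(n+1) = 0 by omega, show 2*n - 2*n = 0 by omega,
      show 2*(n+1) = (2*n+1)+1 by ring, Nat.factorial_succ, Nat.factorial_succ,
      Nat.factorial_succ n]
  have h2 : ((2*n:ℕ).factorial : ℝ) ≠ 0 := by exact_mod_cast (Nat.factorial_pos _).ne'
  have h3 : ((n:ℕ).factorial : ℝ) ≠ 0 := by exact_mod_cast (Nat.factorial_pos _).ne'
  push_cast
  field_simp
  ring

lemma myasc_succ (b : ℝ) (k : ℕ) : myasc b (k+1) = myasc b k * (b + k) :=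
  Finset.prod_range_succ _ _

lemma key (n : ℕ) (b : ℝ) :
    ∑ r ∈ Finset.range (n+1), (-1:ℝ)^r * myc n r * myasc b (n - r)
      = ∏ j ∈ Finset.range n, (b - 1/2 - j) := by
  induction n with
  | zero => simp [myasc, myc_zero]
  | succ n ih =>
    rw [Finset.prod_range_succ, ← ih, Finset.sum_mul]
    have hsplit : ∀ r ∈ Finset.range (n+1),
        (-1:ℝ)^r * myc n r * myasc b (n - r) * (b - 1/2 - n)
          = (-1:ℝ)^r * myc n r * myasc b (n + 1 - r)
            - (-1:ℝ)^r * myc n r * (2*(n:ℝ) - r + 1/2) * myasc b (n - r) := by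
      intro r hr
      rw [Finset.mem_range] at hr
      have hr' : r ≤ n := by omega
      rw [show n + 1 - r = (n - r) + 1 by omega, myasc_succ]
      have hc : ((n - r : ℕ) : ℝ) = (n : ℝ) - r := by
        push_cast [Nat.cast_sub hr']; ring
      rw [hc]; ring
    rw [Finset.sum_congr rfl hsplit, Finset.sum_sub_distrib]
    -- LHS manipulations
    rw [Finset.sum_range_succ' (fun r => (-1:ℝ)^r * myc (n+1) r * myasc b (n + 1 - r)) (n+1)]
    rw [Finset.sum_range_succ (fun r => (-1:ℝ)^(r+1) * myc (n+1) (r+1) * myasc b (n + 1 - (r+1))) n]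
    rw [Finset.sum_range_succ' (fun r => (-1:ℝ)^r * myc n r * myasc b (n + 1 - r)) n]
    rw [Finset.sum_range_succ (fun r => (-1:ℝ)^r * myc n r * (2*(n:ℝ) - r + 1/2) * myasc b (n - r)) n]
    have hmain : ∑ r ∈ Finset.range n, (-1:ℝ)^(r+1) * myc (n+1) (r+1) * myasc b (n + 1 - (r+1))
        = ∑ r ∈ Finset.range n, ((-1:ℝ)^(r+1) * myc n (r+1) * myasc b (n + 1 - (r+1))
            - (-1:ℝ)^r * myc n r * (2*(n:ℝ) - r + 1/2) * myasc b (n - r)) := by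
      refine Finset.sum_congr rfl fun r hr => ?_
      rw [Finset.mem_range] at hr
      rw [myc_rec n r (by omega), show n + 1 - (r+1) = n - r by omega]
      ring
    rw [hmain, Finset.sum_sub_distrib]
    have hlast : (-1:ℝ)^(n+1) * myc (n+1) (n+1) * myasc b (n + 1 - (n+1))
        = - ((-1:ℝ)^n * myc n n * (2*(n:ℝ) - n + 1/2) * myasc b (n - n)) := by
      rw [show n + 1 - (n+1) = 0 by omega, show n - n = 0 by omega, myc_last]; ring
    have h0 : (-1:ℝ)^0 * myc (n+1) 0 * myasc b (n + 1 - 0)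
        = (-1:ℝ)^0 * myc n 0 * myasc b (n + 1 - 0) := by
      rw [myc_zero, myc_zero]
    rw [hlast, h0]
    ring

lemma gamma_shift (x : ℝ) (hx : 0 < x) (k : ℕ) :
    Real.Gamma (x + k) = Real.Gamma x * myasc x k := by
  induction k with
  | zero => simp [myasc]
  | succ k ih =>
    have h : x + ((k:ℕ)+1 : ℕ) = (x + k) + 1 := by push_cast; ring
    rw [h, Real.Gamma_add_one (by positivity), ih, myasc_succ]
    ring

lemma asc_half (r : ℕ) :
    myasc (1/2) r = (Nat.factorial (2*r) : ℝ) / (4^r * (Nat.factorial r : ℝ)) := by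
  induction r with
  | zero => simp [myasc]
  | succ r ih =>
    rw [myasc_succ, ih,
        show 2*(r+1) = (2*r+1)+1 by ring, Nat.factorial_succ, Nat.factorial_succ,
        Nat.factorial_succ r]
    have h1 : ((2*r:ℕ).factorial : ℝ) ≠ 0 := by exact_mod_cast (Nat.factorial_pos _).ne'
    have h2 : ((r:ℕ).factorial : ℝ) ≠ 0 := by exact_mod_cast (Nat.factorial_pos _).ne'
    push_cast
    field_simp
    ring

lemma choose_asc (n r : ℕ) (h : r ≤ n) :
    ((Nat.choose (2*n) (2*r) : ℕ) : ℝ) * myasc (1/2) r = myc n r := by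
  rw [asc_half, Nat.cast_choose ℝ (by omega : 2*r ≤ 2*n), myc]
  have h1 : ((2*r:ℕ).factorial : ℝ) ≠ 0 := by exact_mod_cast (Nat.factorial_pos _).ne'
  have h2 : ((2*n - 2*r:ℕ).factorial : ℝ) ≠ 0 := by exact_mod_cast (Nat.factorial_pos _).ne'
  have h3 : ((r:ℕ).factorial : ℝ) ≠ 0 := by exact_mod_cast (Nat.factorial_pos _).ne'
  field_simp

theorem aux (n : ℕ) (hn : 1 ≤ n) (α : ℝ) (hα : 0 < α) :
    ∑ r ∈ Finset.range (n + 1),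
        ((Nat.choose (2 * n) (2 * r) : ℝ)) * (-1) ^ r * Real.Gamma ((r : ℝ) + 1 / 2)
          * Real.Gamma (α + 2 * n - r - 1 / 2) / Real.Gamma (α + 2 * n)
      = Real.sqrt Real.pi * Real.Gamma (α + n) * Real.Gamma (α + n - 1 / 2)
        / (Real.Gamma α * Real.Gamma (α + 2 * n)) := by
  have hn' : (1:ℝ) ≤ (n:ℝ) := by exact_mod_cast hn
  have hb : 0 < α + (n:ℝ) - 1/2 := by linarith
  have hΓα : Real.Gamma α ≠ 0 := (Real.Gamma_pos_of_pos hα).ne'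
  have hΓb : Real.Gamma (α + (n:ℝ) - 1/2) ≠ 0 := (Real.Gamma_pos_of_pos hb).ne'
  have hΓ2 : Real.Gamma (α + 2*(n:ℝ)) ≠ 0 :=
    (Real.Gamma_pos_of_pos (by positivity)).ne'
  have hterm : ∀ r ∈ Finset.range (n+1),
      ((Nat.choose (2 * n) (2 * r) : ℝ)) * (-1) ^ r * Real.Gamma ((r : ℝ) + 1 / 2)
        * Real.Gamma (α + 2 * n - r - 1 / 2) / Real.Gamma (α + 2 * n)
      = ((-1:ℝ)^r * myc n r * myasc (α + (n:ℝ) - 1/2) (n - r))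
          * (Real.sqrt Real.pi * Real.Gamma (α + (n:ℝ) - 1/2) / Real.Gamma (α + 2*(n:ℝ))) := by
    intro r hr
    rw [Finset.mem_range] at hr
    have hr' : r ≤ n := by omega
    have e1 : Real.Gamma ((r : ℝ) + 1 / 2) = Real.sqrt Real.pi * myasc (1/2) r := by
      rw [show (r:ℝ) + 1/2 = 1/2 + r by ring, gamma_shift (1/2) (by norm_num) r,
        Real.Gamma_one_half_eq]
    have e2 : Real.Gamma (α + 2 * n - r - 1 / 2)
        = Real.Gamma (α + (n:ℝ) - 1/2) * myasc (α + (n:ℝ) - 1/2) (n - r) := by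
      rw [show α + 2 * (n:ℝ) - r - 1 / 2 = (α + (n:ℝ) - 1/2) + ((n - r : ℕ) : ℝ) by
            rw [Nat.cast_sub hr']; ring]
      exact gamma_shift _ hb (n - r)
    rw [e1, e2, ← choose_asc n r hr']
    ring
  rw [Finset.sum_congr rfl hterm, ← Finset.sum_mul, key n (α + (n:ℝ) - 1/2)]
  have hprod : ∏ j ∈ Finset.range n, ((α + (n:ℝ) - 1/2) - 1/2 - j) = myasc α n := by
    rw [myasc, ← Finset.prod_range_reflect (fun j => α + (j:ℝ)) n]
    refine Finset.prod_congr rfl fun j hj => ?_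
    rw [Finset.mem_range] at hj
    rw [Nat.cast_sub (by omega : j ≤ n - 1), Nat.cast_sub hn, Nat.cast_one]
    ring
  rw [hprod, gamma_shift α hα n]
  field_simp

/-- For a nonnegative integer `n` and real `α > 0`,
`∑_{r=0}^n C(2n,2r)(-1)^r Γ(r+1/2)Γ(α+2n-r-1/2)/Γ(α+2n)
  = √π Γ(α+n)Γ(α+n-1/2)/(Γ(α)Γ(α+2n))`. -/
theorem sum_gamma_identity (n : ℕ) (α : ℝ) (hα : 0 < α) :
    ∑ r ∈ Finset.range (n + 1),
        ((Nat.choose (2 * n) (2 * r) : ℝ)) * (-1) ^ r * Real.Gamma ((r : ℝ) + 1 / 2)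
          * Real.Gamma (α + 2 * n - r - 1 / 2) / Real.Gamma (α + 2 * n)
      = Real.sqrt Real.pi * Real.Gamma (α + n) * Real.Gamma (α + n - 1 / 2)
        / (Real.Gamma α * Real.Gamma (α + 2 * n)) := by
  rcases Nat.eq_zero_or_pos n with rfl | hn
  · have hΓ : Real.Gamma α ≠ 0 := (Real.Gamma_pos_of_pos hα).ne'
    rw [Finset.sum_range_one]
    norm_num
    rw [Real.Gamma_one_half_eq]
    field_simp
  · exact aux n hn α hα
end
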